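/- For a nonempty family S ⊆ 2^[n], the following are equivalent: (1) S is a lattice (closed under union and intersection); (2) S is the set of minimizers of some submodular function on 2^[n]; (3) the Hamming distance function d_S(x) = min_{y ∈ S} |x Δ y| is submodular. -/

import Mathlib

/-!
If `S` is a lattice and `a, b ∈ S` are nearest to `A, B`, then `a ∪ b, a ∩ b ∈ S`, and
`|(A ∪ B) ∆ (a ∪ b)| + |(A ∩ B) ∆ (a ∩ b)| ≤ |A ∆ a| + |B ∆ b|`; hence `d_S` is submodular.
Conversely `d_S` itself is a submodular function whose minimizers are `S`: it is `≥ 0` and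
vanishes exactly on `S`.
Finally, the minimizers of any submodular function are closed under `⊔` and `⊓`,
since `f (A ⊔ B) + f (A ⊓ B) ≤ f A + f B` forces both terms on the left to be minimal.
-/

open scoped symmDiff
open Finset

section Minimizers

variable {α β : Type*} [Lattice α] [AddCommMonoid β] [PartialOrder β]
  [IsOrderedCancelAddMonoid β] {f : α → β} {A B : α}

theorem sup_inf_isMinimizer_of_submodular (hf : ∀ A B, f (A ⊔ B) + f (A ⊓ B) ≤ f A + f B)
    (hA : ∀ U, f A ≤ f U) (hB : ∀ U, f B ≤ f U) :
    (∀ U, f (A ⊔ B) ≤ f U) ∧ ∀ U, f (A ⊓ B) ≤ f U := by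
  have hsup : f (A ⊔ B) ≤ f A :=
    le_of_add_le_add_right ((hf A B).trans (add_le_add le_rfl (hB _)))
  have hinf : f (A ⊓ B) ≤ f B :=
    le_of_add_le_add_left ((hf A B).trans (add_le_add (hA _) le_rfl))
  exact ⟨fun U => hsup.trans (hA U), fun U => hinf.trans (hB U)⟩

end Minimizers

namespace Finset

variable {α : Type*} [DecidableEq α]

theorem card_add_card_le_of_union_subset_of_inter_subset {X Y P Q : Finset α}
    (hunion : X ∪ Y ⊆ P ∪ Q) (hinter : X ∩ Y ⊆ P ∩ Q) : #X + #Y ≤ #P + #Q := by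
  rw [← card_union_add_card_inter X Y, ← card_union_add_card_inter P Q]
  exact add_le_add (card_le_card hunion) (card_le_card hinter)

theorem card_union_symmDiff_add_card_inter_symmDiff_le (A B a b : Finset α) :
    #((A ∪ B) ∆ (a ∪ b)) + #((A ∩ B) ∆ (a ∩ b)) ≤ #(A ∆ a) + #(B ∆ b) := by
  apply card_add_card_le_of_union_subset_of_inter_subset <;>
  · intro x
    simp only [mem_union, mem_inter, mem_symmDiff]
    tauto

def symmDiffDist (S : Finset (Finset α)) (hS : S.Nonempty) (A : Finset α) : ℕ :=
  S.inf' hS fun y => #(A ∆ y)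

variable {S : Finset (Finset α)} (hS : S.Nonempty)

theorem symmDiffDist_eq_zero_iff {A : Finset α} : symmDiffDist S hS A = 0 ↔ A ∈ S := by
  constructor
  · intro h
    obtain ⟨y, hy, hAy⟩ := exists_mem_eq_inf' hS fun y => #(A ∆ y)
    rw [symmDiffDist, hAy, card_eq_zero, symmDiff_eq_empty] at h
    rwa [h]
  · intro hA
    exact Nat.eq_zero_of_le_zero ((inf'_le _ hA).trans_eq (by simp))

theorem symmDiffDist_submodular (hS_lattice : ∀ A ∈ S, ∀ B ∈ S, A ∪ B ∈ S ∧ A ∩ B ∈ S)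
    (A B : Finset α) :
    symmDiffDist S hS (A ∪ B) + symmDiffDist S hS (A ∩ B) ≤
      symmDiffDist S hS A + symmDiffDist S hS B := by
  obtain ⟨a, ha, hAa⟩ := exists_mem_eq_inf' hS fun y => #(A ∆ y)
  obtain ⟨b, hb, hBb⟩ := exists_mem_eq_inf' hS fun y => #(B ∆ y)
  obtain ⟨hab_union, hab_inter⟩ := hS_lattice a ha b hb
  calc symmDiffDist S hS (A ∪ B) + symmDiffDist S hS (A ∩ B)
      ≤ #((A ∪ B) ∆ (a ∪ b)) + #((A ∩ B) ∆ (a ∩ b)) :=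
        add_le_add (inf'_le _ hab_union) (inf'_le _ hab_inter)
    _ ≤ #(A ∆ a) + #(B ∆ b) := card_union_symmDiff_add_card_inter_symmDiff_le A B a b
    _ = symmDiffDist S hS A + symmDiffDist S hS B := by rw [symmDiffDist, symmDiffDist, hAa, hBb]

theorem mem_iff_symmDiffDist_le {A : Finset α} :
    A ∈ S ↔ ∀ U, (symmDiffDist S hS A : ℝ) ≤ symmDiffDist S hS U := by
  refine ⟨fun hA U => ?_, fun hmin => ?_⟩
  · rw [(symmDiffDist_eq_zero_iff hS).mpr hA, Nat.cast_zero]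
    exact Nat.cast_nonneg _
  · have ⟨y, hy⟩ := hS
    have := hmin y
    rw [(symmDiffDist_eq_zero_iff hS).mpr hy, Nat.cast_zero, Nat.cast_nonpos] at this
    exact (symmDiffDist_eq_zero_iff hS).mp this

end Finset

theorem lattice_minimizers_hamming_tfae (n : ℕ)
    (S : Finset (Finset (Fin n))) (hS : S.Nonempty) :
    List.TFAE
      [ (∀ A ∈ S, ∀ B ∈ S, A ∪ B ∈ S ∧ A ∩ B ∈ S),
        (∃ f : Finset (Fin n) → ℝ,
          (∀ A B : Finset (Fin n), f (A ∪ B) + f (A ∩ B) ≤ f A + f B) ∧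
          (∀ A : Finset (Fin n), A ∈ S ↔ ∀ U : Finset (Fin n), f A ≤ f U)),
        (∀ A B : Finset (Fin n),
          S.inf' hS (fun y => ((A ∪ B) ∆ y).card) +
            S.inf' hS (fun y => ((A ∩ B) ∆ y).card) ≤
          S.inf' hS (fun y => (A ∆ y).card) +
            S.inf' hS (fun y => (B ∆ y).card)) ] := by
  tfae_have 1 → 3 := symmDiffDist_submodular hS
  tfae_have 3 → 2 := fun hsub =>
    ⟨fun A => symmDiffDist S hS A, fun A B => by beta_reduce; exact_mod_cast (hsub A B : symmDiffDist S hS (A ∪ B) + _ ≤ _),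
      fun _ => mem_iff_symmDiffDist_le hS⟩
  tfae_have 2 → 1 := by
    rintro ⟨f, hsub, hmin⟩ A hA B hB
    have h := sup_inf_isMinimizer_of_submodular hsub ((hmin A).mp hA) ((hmin B).mp hB)
    exact ⟨(hmin _).mpr h.1, (hmin _).mpr h.2⟩
  tfae_finish
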